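/- Let δ : E × E → E be continuously differentiable and let ω⋆ ∈ E satisfy δ(ω⋆, ω⋆) = 0. Let ω̄₀⋆ := ω̄₀ ∈ E be given and let the sequence (ω̄_l⋆) of fitted policy evaluation iterates satisfy δ(ω̄_{l+1}⋆, ω̄_l⋆) = 0 for every l ≥ 0. Assume that for every i the continuous linear map H̄(ω̄_{i+1}⋆, ω⋆; ω̄_i⋆) is invertible. Then for every l ≥ 0, ω̄_l⋆ − ω⋆ = (A_{l−1} ∘ A_{l−2} ∘ ⋯ ∘ A_0)(ω̄₀ − ω⋆), where A_i := H̄(ω̄_{i+1}⋆, ω⋆; ω̄_i⋆)⁻¹ ∘ J̄_δ(ω̄_i⋆, ω⋆; ω⋆). -/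

import Mathlib

open MeasureTheory intervalIntegral

noncomputable section

abbrev E (n : ℕ) := EuclideanSpace ℝ (Fin n)

/-- Partial Fréchet derivative of `δ` w.r.t. its first argument. -/
noncomputable def D1 {n : ℕ} (δ : E n × E n → E n) (a b : E n) : E n →L[ℝ] E n :=
  fderiv ℝ (fun x => δ (x, b)) a

/-- Partial Fréchet derivative of `δ` w.r.t. its second argument. -/
noncomputable def D2 {n : ℕ} (δ : E n × E n → E n) (a b : E n) : E n →L[ℝ] E n :=
  fderiv ℝ (fun y => δ (a, y)) b

/-- Path-mean Hessian `H̄(ω, ω⋆; ω̄) = −∫₀¹ D₁δ(ω − t(ω − ω⋆), ω̄) dt`. -/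
noncomputable def Hbar {n : ℕ} (δ : E n × E n → E n) (ω ωs ωbar : E n) : E n →L[ℝ] E n :=
  -∫ t in (0:ℝ)..1, D1 δ (ω - t • (ω - ωs)) ωbar

/-- Path-mean target Jacobian `J̄_δ(ω, ω⋆; ω̄) = ∫₀¹ D₂δ(ω̄, ω − t(ω − ω⋆)) dt`. -/
noncomputable def Jbar {n : ℕ} (δ : E n × E n → E n) (ω ωs ωbar : E n) : E n →L[ℝ] E n :=
  ∫ t in (0:ℝ)..1, D2 δ ωbar (ω - t • (ω - ωs))

/-! Differentiating `t ↦ δ(ω − t(ω − ω⋆), ω̄)` and integrating over `[0, 1]` gives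
`H̄(ω, ω⋆; ω̄)(ω − ω⋆) = δ(ω⋆, ω̄) − δ(ω, ω̄)`, and likewise
`J̄_δ(ω, ω⋆; ω̄)(ω − ω⋆) = δ(ω̄, ω) − δ(ω̄, ω⋆)`. With `δ(ω̄_{l+1}⋆, ω̄_l⋆) = 0` and `δ(ω⋆, ω⋆) = 0`
both sides of `H̄(ω̄_{l+1}⋆, ω⋆; ω̄_l⋆)(ω̄_{l+1}⋆ − ω⋆) = J̄_δ(ω̄_l⋆, ω⋆; ω⋆)(ω̄_l⋆ − ω⋆)` equal
`δ(ω⋆, ω̄_l⋆)`, so each step of the iteration applies `A_l` to the error, and the formula follows by induction on `l`. -/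

section MeanValue

variable {F G : Type*} [NormedAddCommGroup F] [NormedSpace ℝ F]
  [NormedAddCommGroup G] [NormedSpace ℝ G] [CompleteSpace G]

theorem ContDiff.sub_eq_intervalIntegral_fderiv {f : F → G} (hf : ContDiff ℝ 1 f) (a b : F) :
    f a - f b = (∫ t in (0:ℝ)..1, fderiv ℝ f (a - t • (a - b))) (a - b) := by
  have hpath (t : ℝ) : HasDerivAt (fun t : ℝ => a - t • (a - b)) (-(a - b)) t := by
    simpa using ((hasDerivAt_id t).smul_const (a - b)).const_sub a
  have hcont : Continuous fun t : ℝ => fderiv ℝ f (a - t • (a - b)) :=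
    (hf.continuous_fderiv one_ne_zero).comp
      (continuous_const.sub (continuous_id.smul continuous_const))
  have hftc := intervalIntegral.integral_eq_sub_of_hasDerivAt
    (fun t _ => (hf.differentiable one_ne_zero _).hasFDerivAt.comp_hasDerivAt t (hpath t))
    ((hcont.clm_apply continuous_const).intervalIntegrable 0 1)
  rw [ContinuousLinearMap.intervalIntegral_apply (hcont.intervalIntegrable 0 1)]
  simp only [Function.comp_def, map_neg, intervalIntegral.integral_neg, one_smul, zero_smul,
    sub_sub_cancel, sub_zero] at hftc
  simpa using congrArg Neg.neg hftc.symm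

end MeanValue

section PathMean

variable {n : ℕ} {δ : E n × E n → E n}

theorem Hbar_apply_sub (hδ : ContDiff ℝ 1 δ) (a b c : E n) :
    Hbar δ a b c (a - b) = δ (b, c) - δ (a, c) := by
  simp only [Hbar, D1, neg_apply]
  rw [← (hδ.comp (contDiff_id.prodMk contDiff_const)).sub_eq_intervalIntegral_fderiv
    (f := fun x => δ (x, c)) a b, neg_sub]

theorem Jbar_apply_sub (hδ : ContDiff ℝ 1 δ) (a b c : E n) :
    Jbar δ a b c (a - b) = δ (c, a) - δ (c, b) := by
  simp only [Jbar, D2]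
  exact ((hδ.comp (contDiff_const.prodMk contDiff_id)).sub_eq_intervalIntegral_fderiv
    (f := fun y => δ (c, y)) a b).symm

theorem Hbar_apply_sub_eq_Jbar_apply_sub (hδ : ContDiff ℝ 1 δ) {ωs x x' : E n}
    (hfix : δ (ωs, ωs) = 0) (hx : δ (x', x) = 0) :
    Hbar δ x' ωs x (x' - ωs) = Jbar δ x ωs ωs (x - ωs) := by
  rw [Hbar_apply_sub hδ, Jbar_apply_sub hδ, hfix, hx, sub_zero]

end PathMean

/-- Theorem 1 of the paper: the fitted policy evaluation iterates
`ω̄_l⋆` (with `δ(ω̄_{l+1}⋆, ω̄_l⋆) = 0` and `ω̄₀⋆ = ω̄₀`) satisfy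
`ω̄_l⋆ − ω⋆ = (A_{l−1} ∘ ⋯ ∘ A_0)(ω̄₀ − ω⋆)` where
`A_i = H̄(ω̄_{i+1}⋆, ω⋆; ω̄_i⋆)⁻¹ ∘ J̄_δ(ω̄_i⋆, ω⋆; ω⋆)`, the inverses being provided by
continuous linear equivalences `Φ i` whose underlying maps agree with `H̄(ω̄_{i+1}⋆, ω⋆; ω̄_i⋆)`. -/
theorem fpe_iterates {n : ℕ} (δ : E n × E n → E n) (hδ : ContDiff ℝ 1 δ)
    (ωs ω0 : E n) (hfix : δ (ωs, ωs) = 0)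
    (ωb : ℕ → E n) (hω0 : ωb 0 = ω0)
    (hfit : ∀ l : ℕ, δ (ωb (l + 1), ωb l) = 0)
    (Φ : ℕ → (E n ≃L[ℝ] E n))
    (hΦ : ∀ i : ℕ, ((Φ i : E n →L[ℝ] E n)) = Hbar δ (ωb (i + 1)) ωs (ωb i)) :
    ∀ l : ℕ,
      ωb l - ωs =
        (List.range l).foldl
          (fun v i => (Φ i).symm (Jbar δ (ωb i) ωs ωs v)) (ω0 - ωs) := by
  intro l
  induction l with
  | zero => simp [hω0]
  | succ l ih =>
    have hstep : (Φ l) (ωb (l + 1) - ωs) = Jbar δ (ωb l) ωs ωs (ωb l - ωs) := by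
      rw [← ContinuousLinearEquiv.coe_coe, hΦ l]
      exact Hbar_apply_sub_eq_Jbar_apply_sub hδ hfix (hfit l)
    rw [List.range_succ, List.foldl_append, ← ih, List.foldl_cons, List.foldl_nil, ← hstep,
      ContinuousLinearEquiv.symm_apply_apply]

end
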